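/- Let G be a finite connected simple graph on n ≥ 2 vertices with Δ(G) ≤ log n, and let X_1, …, X_T be vertices of G chosen independently and uniformly at random with β = (1/T) · Σ_{t=1}^{T} DC(X_t). Then for every ε > 0 and δ ∈ (0,1), if T ≥ ln(2/δ)·(log n)²/(2ε²), the probability that |ADPL(G) − β| > ε is at most δ. -/

import Mathlib

/-- The number of shortest paths between `v` and `u`: walks from `v` to `u`
whose length equals the graph distance (such walks are exactly the shortest paths). -/
noncomputable def nsp {V : Type*} (G : SimpleGraph V) (v u : V) : ℕ :=
  Nat.card {p : G.Walk v u // p.length = G.dist v u}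

/-- The discriminative distance `dd(v,u) = d(v,u) / σ(v,u)`. -/
noncomputable def dd {V : Type*} (G : SimpleGraph V) (v u : V) : ℝ :=
  (G.dist v u : ℝ) / (nsp G v u : ℝ)

/-- The diameter `Δ(G) = max_{v,u} d(v,u)`. -/
noncomputable def graphDiam {V : Type*} [Fintype V] (G : SimpleGraph V) : ℕ :=
  Finset.sup Finset.univ fun v => Finset.sup Finset.univ fun u => G.dist v u

/-- Discriminative closeness `DC(v) = (1/(n-1)) ⬝ Σ_{u ≠ v} dd(v,u)`. -/
noncomputable def DC {V : Type*} [Fintype V] [DecidableEq V] (G : SimpleGraph V) (v : V) : ℝ :=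
  (1 / ((Fintype.card V : ℝ) - 1)) * ∑ u ∈ Finset.univ.erase v, dd G v u

/-- Average discriminative path length `ADPL(G) = (1/(n(n-1))) ⬝ Σ_v Σ_{u ≠ v} dd(v,u)`. -/
noncomputable def ADPL {V : Type*} [Fintype V] [DecidableEq V] (G : SimpleGraph V) : ℝ :=
  (1 / ((Fintype.card V : ℝ) * ((Fintype.card V : ℝ) - 1))) *
    ∑ v : V, ∑ u ∈ Finset.univ.erase v, dd G v u

/-! Every discriminative distance lies between `0` and the diameter, so `DC` takes values in
`[0, log n]`, and its mean under the uniform distribution on vertices is `ADPL(G)`. Thus `β` is the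
empirical mean of `T` independent samples of a bounded random variable with mean `ADPL(G)`, and
Hoeffding's inequality bounds the probability of a deviation beyond `ε` by
`2 exp (-2Tε² / (log n)²)`, which the choice of `T` makes at most `δ`. -/

open MeasureTheory ProbabilityTheory Real
open scoped BigOperators

section Hoeffding

variable {ι V : Type*} [Fintype ι] [MeasurableSpace V] (ν : Measure V) [IsProbabilityMeasure ν]
  {f : V → ℝ} {a b ε : ℝ}

theorem measureReal_pi_sum_sub_integral_ge_le (hf : Measurable f) (hfab : ∀ v, f v ∈ Set.Icc a b)
    (hε : 0 ≤ ε) :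
    (Measure.pi fun _ : ι => ν).real {ω | ε ≤ ∑ i, (f (ω i) - ∫ v, f v ∂ν)}
      ≤ exp (-2 * ε ^ 2 / (Fintype.card ι * (b - a) ^ 2)) := by
  have hsubG : HasSubgaussianMGF (fun v => f v - ∫ v, f v ∂ν) ((‖b - a‖₊ / 2) ^ 2) ν :=
    hasSubgaussianMGF_of_mem_Icc hf.aemeasurable (ae_of_all _ hfab)
  have hsubG_eval (i : ι) : HasSubgaussianMGF (fun ω : ι → V => f (ω i) - ∫ v, f v ∂ν)
      ((‖b - a‖₊ / 2) ^ 2) (Measure.pi fun _ => ν) :=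
    .of_map (measurable_pi_apply i).aemeasurable
      (by rwa [(measurePreserving_eval (fun _ => ν) i).map_eq])
  have hindep : iIndepFun (fun i (ω : ι → V) => f (ω i) - ∫ v, f v ∂ν) (Measure.pi fun _ => ν) :=
    iIndepFun_pi (X := fun _ v => f v - ∫ v, f v ∂ν) fun _ => (hf.sub_const _).aemeasurable
  refine (HasSubgaussianMGF.measure_sum_ge_le_of_iIndepFun hindep (fun i _ => hsubG_eval i)
    hε).trans_eq ?_
  simp only [Finset.sum_const, Finset.card_univ, nsmul_eq_mul]
  push_cast
  rw [Real.norm_eq_abs, div_pow, sq_abs]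
  generalize (b - a) ^ 2 = d
  ring_nf

theorem measureReal_pi_abs_sum_sub_integral_ge_le (hf : Measurable f)
    (hfab : ∀ v, f v ∈ Set.Icc a b) (hε : 0 ≤ ε) :
    (Measure.pi fun _ : ι => ν).real {ω | ε ≤ |∑ i, (f (ω i) - ∫ v, f v ∂ν)|}
      ≤ 2 * exp (-2 * ε ^ 2 / (Fintype.card ι * (b - a) ^ 2)) := by
  have hupper := measureReal_pi_sum_sub_integral_ge_le (ι := ι) ν hf hfab hε
  have hlower := measureReal_pi_sum_sub_integral_ge_le (ι := ι) ν hf.neg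
    (a := -b) (b := -a) (fun v => ⟨neg_le_neg (hfab v).2, neg_le_neg (hfab v).1⟩) hε
  simp only [Pi.neg_apply, integral_neg, sub_neg_eq_add, neg_add_eq_sub] at hlower
  calc _ ≤ (Measure.pi fun _ : ι => ν).real ({ω | ε ≤ ∑ i, (f (ω i) - ∫ v, f v ∂ν)} ∪
          {ω | ε ≤ ∑ i, (∫ v, f v ∂ν - f (ω i))}) := by
        refine measureReal_mono fun ω (hω : ε ≤ |_|) => ?_
        rcases le_abs.mp hω with h | h
        · exact Or.inl h
        · right
          simpa only [Set.mem_ofPred_eq, ← Finset.sum_neg_distrib, neg_sub] using h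
    _ ≤ _ := measureReal_union_le _ _
    _ ≤ _ := by linarith

theorem measureReal_pi_abs_mean_sub_integral_ge_le [Nonempty ι] (hf : Measurable f)
    (hfab : ∀ v, f v ∈ Set.Icc a b) (hε : 0 ≤ ε) :
    (Measure.pi fun _ : ι => ν).real {ω | ε ≤ |(∑ i, f (ω i)) / Fintype.card ι - ∫ v, f v ∂ν|}
      ≤ 2 * exp (-2 * Fintype.card ι * ε ^ 2 / (b - a) ^ 2) := by
  have hN : (0 : ℝ) < Fintype.card ι := by exact_mod_cast Fintype.card_pos
  have hevent : {ω : ι → V | ε ≤ |(∑ i, f (ω i)) / Fintype.card ι - ∫ v, f v ∂ν|} =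
      {ω | Fintype.card ι * ε ≤ |∑ i, (f (ω i) - ∫ v, f v ∂ν)|} := by
    ext ω
    rw [Set.mem_ofPred_eq, Set.mem_ofPred_eq, ← mul_le_mul_iff_of_pos_left hN, ← abs_of_pos hN,
      ← abs_mul, abs_of_pos hN, Finset.sum_sub_distrib, Finset.sum_const, Finset.card_univ,
      nsmul_eq_mul, mul_sub, mul_div_cancel₀ _ hN.ne']
  rw [hevent]
  refine (measureReal_pi_abs_sum_sub_integral_ge_le ν hf hfab (by positivity)).trans_eq ?_
  congr 2
  field_simp

end Hoeffding

section UniformOn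

variable {Ω : Type*} [Fintype Ω] [MeasurableSpace Ω] [MeasurableSingletonClass Ω]

theorem uniformOn_univ_real_eq (s : Set Ω) :
    (uniformOn (Set.univ : Set Ω)).real s = Nat.card s / Fintype.card Ω := by
  rw [measureReal_def, uniformOn_univ,
    Measure.count_apply_finite' s.toFinite s.toFinite.measurableSet, Nat.card_coe_set_eq,
    Set.ncard_eq_toFinset_card s s.toFinite]
  simp

theorem integral_uniformOn_univ (f : Ω → ℝ) :
    ∫ x, f x ∂uniformOn (Set.univ : Set Ω) = (∑ x, f x) / Fintype.card Ω := by
  rw [integral_fintype .of_finite, Finset.sum_div]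
  simp [uniformOn_univ_real_eq, div_eq_inv_mul]

end UniformOn

section DiscriminativeDistance

variable {V : Type*} (G : SimpleGraph V)

theorem dd_nonneg (v u : V) : 0 ≤ dd G v u := by
  unfold dd
  positivity

theorem dd_le_dist (v u : V) : dd G v u ≤ G.dist v u := by
  rcases (nsp G v u).eq_zero_or_pos with h | h
  · simp [dd, h]
  · exact div_le_self (Nat.cast_nonneg _) (by exact_mod_cast h)

variable [Fintype V]

theorem dist_le_graphDiam (v u : V) : G.dist v u ≤ graphDiam G :=
  (Finset.le_sup (f := fun u => G.dist v u) (Finset.mem_univ u)).trans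
    (Finset.le_sup (f := fun v => Finset.univ.sup fun u => G.dist v u) (Finset.mem_univ v))

variable [DecidableEq V]

theorem DC_eq_expect (v : V) : DC G v = 𝔼 u ∈ Finset.univ.erase v, dd G v u := by
  rw [Finset.expect_eq_sum_div_card, Finset.card_erase_of_mem (Finset.mem_univ v),
    Finset.card_univ, Nat.cast_pred (Fintype.card_pos_iff.mpr ⟨v⟩), DC, one_div_mul_eq_div]

theorem DC_nonneg (v : V) : 0 ≤ DC G v := by
  rw [DC_eq_expect]
  exact Finset.expect_nonneg fun u _ => dd_nonneg G v u

theorem DC_le_graphDiam (v : V) : DC G v ≤ graphDiam G := by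
  rw [DC_eq_expect]
  rcases (Finset.univ.erase v).eq_empty_or_nonempty with hs | hs
  · simp [hs]
  · exact Finset.expect_le hs fun u _ =>
      (dd_le_dist G v u).trans (by exact_mod_cast dist_le_graphDiam G v u)

theorem ADPL_eq_sum_DC_div : ADPL G = (∑ v, DC G v) / Fintype.card V := by
  simp only [ADPL, DC, ← Finset.mul_sum, one_div, mul_inv]
  ring

end DiscriminativeDistance

theorem two_mul_exp_neg_le_of_log_two_div_le {δ x : ℝ} (hδ : 0 < δ) (h : log (2 / δ) ≤ x) :
    2 * exp (-x) ≤ δ :=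
  calc 2 * exp (-x) ≤ 2 * exp (-log (2 / δ)) := by gcongr
    _ = δ := by rw [exp_neg, exp_log (by positivity)]; field_simp

theorem stmt6_general {V : Type*} [Fintype V] [DecidableEq V] (G : SimpleGraph V)
    (hn : 2 ≤ Fintype.card V)
    (hdiam : (graphDiam G : ℝ) ≤ Real.log (Fintype.card V))
    (T : ℕ) (hT : 0 < T) (ε : ℝ) (hε : 0 < ε) (δ : ℝ) (hδ0 : 0 < δ)
    (hTbound : Real.log (2 / δ) * Real.log (Fintype.card V) ^ 2 / (2 * ε ^ 2) ≤ (T : ℝ)) :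
    (Nat.card {ω : Fin T → V |
        ε < |ADPL G - (1 / (T : ℝ)) * ∑ t : Fin T, DC G (ω t)|} : ℝ) /
      (Fintype.card (Fin T → V) : ℝ) ≤ δ := by
  let _ : MeasurableSpace V := ⊤
  have : Nonempty V := Fintype.card_pos_iff.mp (by omega)
  have : Nonempty (Fin T) := Fin.pos_iff_nonempty.mp hT
  set L := Real.log (Fintype.card V)
  have hL : 0 < L := Real.log_pos (by exact_mod_cast hn)
  have hDC (v : V) : DC G v ∈ Set.Icc 0 L := ⟨DC_nonneg G v, (DC_le_graphDiam G v).trans hdiam⟩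
  have hmean : ∫ v, DC G v ∂uniformOn Set.univ = ADPL G := by
    rw [integral_uniformOn_univ, ADPL_eq_sum_DC_div]
  have hexponent : log (2 / δ) ≤ 2 * T * ε ^ 2 / L ^ 2 := by
    rw [div_le_iff₀ (by positivity)] at hTbound
    rw [le_div_iff₀ (by positivity)]
    linarith
  rw [← uniformOn_univ_real_eq, ← Set.pi_univ Set.univ, uniformOn_pi]
  calc _ ≤ (Measure.pi fun _ : Fin T => uniformOn (Set.univ : Set V)).real
        {ω | ε ≤ |(∑ t, DC G (ω t)) / Fintype.card (Fin T) - ∫ v, DC G v ∂uniformOn Set.univ|} := by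
        refine measureReal_mono fun ω (hω : ε < _) => ?_
        rw [Set.mem_ofPred_eq, hmean, Fintype.card_fin, abs_sub_comm, ← one_div_mul_eq_div]
        exact hω.le
    _ ≤ 2 * exp (-2 * Fintype.card (Fin T) * ε ^ 2 / (L - 0) ^ 2) :=
        measureReal_pi_abs_mean_sub_integral_ge_le _ .of_discrete hDC hε.le
    _ ≤ δ := by
        simpa [neg_mul, neg_div] using two_mul_exp_neg_le_of_log_two_div_le hδ0 hexponent

/-- If `Δ(G) ≤ log n`, then for `T ≥ ln(2/δ)(log n)²/(2ε²)` vertices chosen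
independently and uniformly at random (i.e. `ω : Fin T → V` drawn uniformly,
`X_t = ω t`) and `β(ω) = (1/T) Σ_t DC(X_t)`, the probability (number of favourable
outcomes divided by the total number of outcomes) that `|ADPL(G) − β| > ε` is at most `δ`. -/
theorem stmt6 {V : Type*} [Fintype V] [DecidableEq V] (G : SimpleGraph V)
    (hconn : G.Connected) (hn : 2 ≤ Fintype.card V)
    (hdiam : (graphDiam G : ℝ) ≤ Real.log (Fintype.card V))
    (T : ℕ) (hT : 0 < T) (ε : ℝ) (hε : 0 < ε) (δ : ℝ) (hδ0 : 0 < δ) (hδ1 : δ < 1)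
    (hTbound : Real.log (2 / δ) * Real.log (Fintype.card V) ^ 2 / (2 * ε ^ 2) ≤ (T : ℝ)) :
    (Nat.card {ω : Fin T → V |
        ε < |ADPL G - (1 / (T : ℝ)) * ∑ t : Fin T, DC G (ω t)|} : ℝ) /
      (Fintype.card (Fin T → V) : ℝ) ≤ δ :=
  stmt6_general G hn hdiam T hT ε hε δ hδ0 hTbound
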